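/- Let A be a unital C*-algebra, H a complex Hilbert space, P ∈ B(H) positive with P ≠ 0 and ker P ≠ {0}, and Φ ∈ CP^{(P)}(A,B(H)). Let H_0 be the closure of the range of P, P_0 the restriction of P to H_0, and Φ_0 : A → B(H_0) the compression of Φ to H_0 (so Φ_0 ∈ CP^{(P_0)}(A,B(H_0))). Then: (i) if Φ is a P-C*-extreme point of CP^{(P)}(A,B(H)), then Φ_0 is a P_0-C*-extreme point of CP^{(P_0)}(A,B(H_0)); (ii) conversely, if H is finite-dimensional and Φ_0 is a P_0-C*-extreme point of CP^{(P_0)}(A,B(H_0)), then Φ is a P-C*-extreme point of CP^{(P)}(A,B(H)). -/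

import Mathlib

open scoped ComplexOrder

noncomputable section

section Defs

variable {A H : Type*}
variable [NormedAddCommGroup H] [InnerProductSpace ℂ H]

/-- An operator on a complex inner product space is positive:
`0 ≤ ⟪x, T x⟫` for all `x`. -/
def IsPosOp (T : H →L[ℂ] H) : Prop := ∀ x : H, 0 ≤ (inner ℂ x (T x) : ℂ)

variable [Ring A] [StarRing A] [Algebra ℂ A]

/-- Complete positivity of a linear map `Φ : A → B(H)`:
`∑_{i,j} ⟪h i, Φ(a i* a j) (h j)⟫ ≥ 0` for all finite families. -/
def IsCPMap (Φ : A →ₗ[ℂ] (H →L[ℂ] H)) : Prop :=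
  ∀ (n : ℕ) (a : Fin n → A) (h : Fin n → H),
    0 ≤ ∑ i, ∑ j, (inner ℂ (h i) ((Φ (star (a i) * a j)) (h j)) : ℂ)

/-- `CP^{(P)}(A, B(H))`: the CP maps `Φ` with `Φ 1 = P`. -/
def CPP (P : H →L[ℂ] H) : Set (A →ₗ[ℂ] (H →L[ℂ] H)) := {Φ | IsCPMap Φ ∧ Φ 1 = P}

/-- `CCP(A, B(H))`: the contractive CP maps, i.e. CP maps with `Φ 1 ≤ 1`. -/
def CCPmaps : Set (A →ₗ[ℂ] (H →L[ℂ] H)) := {Φ | IsCPMap Φ ∧ IsPosOp (1 - Φ 1)}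

variable [CompleteSpace H]

/-- `Ad_T : X ↦ T* X T`, as a linear map on `B(H)`. -/
def conjAd (T : H →L[ℂ] H) : (H →L[ℂ] H) →ₗ[ℂ] (H →L[ℂ] H) where
  toFun X := star T * X * T
  map_add' X Y := by simp [add_mul, mul_add]
  map_smul' c X := by simp [mul_smul_comm, smul_mul_assoc]

/-- `Φ ∈ CP^{(P)}` is a `P`-`C*`-extreme point of `CP^{(P)}(A, B(H))`:
whenever `Φ = ∑ Ad_{T j} ∘ Φs j` is a proper `P`-`C*`-convex combination of members of
`CP^{(P)}`, each `Φs j` equals `Ad_{S j} ∘ Φ` for some invertible `S j`. -/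
def IsPCExtreme (P : H →L[ℂ] H) (Φ : A →ₗ[ℂ] (H →L[ℂ] H)) : Prop :=
  Φ ∈ CPP (A := A) P ∧
  ∀ (n : ℕ) (T : Fin n → (H →L[ℂ] H)) (Φs : Fin n → (A →ₗ[ℂ] (H →L[ℂ] H))),
    (∀ j, IsUnit (T j)) → (∀ j, Φs j ∈ CPP (A := A) P) →
    (∑ j, star (T j) * P * T j) = P →
    Φ = ∑ j, (conjAd (T j)).comp (Φs j) →
    ∀ j, ∃ S : H →L[ℂ] H, IsUnit S ∧ Φs j = (conjAd S).comp Φ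

/-- `Φ ∈ C` is a `C*`-extreme point of the `C*`-convex set `C`:
whenever `Φ = ∑ Ad_{T j} ∘ Φs j` is a proper `C*`-convex combination of members of `C`,
each `Φs j` is unitarily equivalent to `Φ`. -/
def IsCstarExtreme (C : Set (A →ₗ[ℂ] (H →L[ℂ] H))) (Φ : A →ₗ[ℂ] (H →L[ℂ] H)) : Prop :=
  Φ ∈ C ∧
  ∀ (n : ℕ) (T : Fin n → (H →L[ℂ] H)) (Φs : Fin n → (A →ₗ[ℂ] (H →L[ℂ] H))),
    (∀ j, IsUnit (T j)) → (∀ j, Φs j ∈ C) →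
    (∑ j, star (T j) * T j) = 1 →
    Φ = ∑ j, (conjAd (T j)).comp (Φs j) →
    ∀ j, ∃ U : H →L[ℂ] H, U ∈ unitary (H →L[ℂ] H) ∧ Φs j = (conjAd U).comp Φ

/-- `Φ ∈ C` is a linear extreme point of the convex set `C`. -/
def IsLinExtreme (C : Set (A →ₗ[ℂ] (H →L[ℂ] H))) (Φ : A →ₗ[ℂ] (H →L[ℂ] H)) : Prop :=
  Φ ∈ C ∧
  ∀ (n : ℕ) (t : Fin n → ℝ) (Φs : Fin n → (A →ₗ[ℂ] (H →L[ℂ] H))),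
    (∀ j, 0 < t j ∧ t j < 1) → (∀ j, Φs j ∈ C) → (∑ j, t j) = 1 →
    Φ = ∑ j, (t j : ℂ) • Φs j →
    ∀ j, Φs j = Φ

end Defs

section Compress

variable {A H : Type*} [NormedAddCommGroup H] [InnerProductSpace ℂ H]

/-- Compression `X ↦ Q X|_K` of an operator on `H` to an operator on the subspace `K`. -/
def compressOp (K : Submodule ℂ H) [K.HasOrthogonalProjection] (X : H →L[ℂ] H) : K →L[ℂ] K :=
  (K.orthogonalProjectionOnto).comp (X.comp K.subtypeL)

variable [Ring A] [StarRing A] [Algebra ℂ A]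

/-- Compression of a linear map `Φ : A → B(H)` to a linear map `A → B(K)`. -/
def compressCP (K : Submodule ℂ H) [K.HasOrthogonalProjection] (Φ : A →ₗ[ℂ] (H →L[ℂ] H)) :
    A →ₗ[ℂ] (K →L[ℂ] K) where
  toFun a := compressOp K (Φ a)
  map_add' a b := by
    simp [compressOp, ContinuousLinearMap.add_comp, ContinuousLinearMap.comp_add]
  map_smul' c a := by
    simp [compressOp, ContinuousLinearMap.smul_comp, ContinuousLinearMap.comp_smulₛₗ]

end Compress

/-! Let `K` be the closure of the range of `P`, so that `Kᗮ = ker P = ker Φ(1)`. A 2 × 2 positivity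
argument shows that a CP map kills `ker Φ(1)` and takes values in `(ker Φ(1))ᗮ`; hence
`Φ = Φ₀ ⊕ 0` with respect to `H = K ⊕ Kᗮ`, and compression and extension by zero are mutually
inverse on the maps involved. For (i), a decomposition `Φ₀ = ∑ Ad_{T j} ∘ Ψ j` extends to
`Φ = ∑ Ad_{T j ⊕ 1} ∘ (Ψ j ⊕ 0)`; the resulting `S` satisfies `S* P S = P`, so `S` and `S⁻¹` both
leave `ker P` invariant and the compression of `S` is invertible. For (ii), `∑ T j* P T j = P` makes
every `T j` leave `ker P` invariant, so compressing is multiplicative on the `T j`, and the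
compressed `T j` have right inverses, which are two-sided since `K` is finite-dimensional. -/

open ComplexConjugate

theorem Complex.eq_zero_of_quadratic_nonneg {α u v : ℂ} (hα : 0 ≤ α)
    (h : ∀ c : ℂ, 0 ≤ conj c * c * α + conj c * u + c * v) : u = 0 ∧ v = 0 := by
  obtain ⟨a, ha, rfl⟩ : ∃ a : ℝ, 0 ≤ a ∧ α = a :=
    ⟨α.re, (Complex.nonneg_iff.mp hα).1, Complex.ext rfl (Complex.nonneg_iff.mp hα).2.symm⟩
  -- `c = 1` and `c = I` force `v = conj u`; then `c = -t u` for small `t > 0` gives `|u|² ≤ 0`.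
  obtain rfl : v = conj u := by
    have h1 := (Complex.nonneg_iff.mp (h 1)).2
    have hI := (Complex.nonneg_iff.mp (h Complex.I)).2
    apply Complex.ext <;> simp at h1 hI ⊢ <;> linarith
  have key (t : ℝ) : 0 ≤ t * (t * a - 2) * Complex.normSq u := by
    have e : conj (-(t : ℂ) * u) * (-(t : ℂ) * u) * a + conj (-(t : ℂ) * u) * u
        + (-(t : ℂ) * u) * conj u = (t * (t * a - 2) * Complex.normSq u : ℝ) := by
      simp only [map_mul, map_neg, Complex.conj_ofReal, Complex.ofReal_mul, Complex.ofReal_sub,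
        Complex.ofReal_ofNat, Complex.normSq_eq_conj_mul_self]
      ring
    exact_mod_cast e ▸ h (-(t : ℂ) * u)
  have hneg : (a + 1)⁻¹ * ((a + 1)⁻¹ * a - 2) < 0 := by
    have : (a + 1)⁻¹ * a < 1 := by rw [inv_mul_lt_one₀ (by positivity)]; linarith
    exact mul_neg_of_pos_of_neg (by positivity) (by linarith)
  have hu : u = 0 := Complex.normSq_eq_zero.mp
    (le_antisymm (nonpos_of_mul_nonneg_right (key (a + 1)⁻¹) hneg) (Complex.normSq_nonneg u))
  simp [hu]

section Positivity

variable {H : Type*} [NormedAddCommGroup H] [InnerProductSpace ℂ H]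

theorem IsPosOp.isSymmetric {T : H →L[ℂ] H} (hT : IsPosOp T) : (T : H →ₗ[ℂ] H).IsSymmetric := by
  refine (LinearMap.isSymmetric_iff_inner_map_self_real _).mpr fun x => ?_
  have hreal : conj (inner ℂ x (T x)) = inner ℂ x (T x) :=
    Complex.conj_eq_iff_im.mpr (Complex.nonneg_iff.mp (hT x)).2.symm
  rw [ContinuousLinearMap.coe_coe, ← inner_conj_symm (T x) x]
  exact congrArg conj hreal

theorem IsPosOp.apply_eq_zero {T : H →L[ℂ] H} (hT : IsPosOp T) {x : H}
    (hx : inner ℂ x (T x) = 0) : T x = 0 := by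
  have hsq (y : H) (c : ℂ) : 0 ≤ conj c * c * inner ℂ y (T y) + conj c * inner ℂ y (T x)
      + c * inner ℂ x (T y) := by
    have := hT (x + c • y)
    simp only [map_add, map_smul, inner_add_left, inner_add_right, inner_smul_left,
      inner_smul_right, hx] at this
    linear_combination this
  have hTx := (Complex.eq_zero_of_quadratic_nonneg (hT (T x)) (hsq (T x))).1
  exact inner_self_eq_zero.mp hTx

theorem IsPosOp.orthogonal_eq_ker {P : H →L[ℂ] H} (hP : IsPosOp P) {K : Submodule ℂ H}
    (hK : K = (LinearMap.range (P : H →ₗ[ℂ] H)).topologicalClosure) :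
    Kᗮ = LinearMap.ker (P : H →ₗ[ℂ] H) := by
  rw [hK, Submodule.orthogonal_closure, hP.isSymmetric.orthogonal_range]

theorem IsPosOp.mapsTo_ker_of_sum_star_mul_mul_eq [CompleteSpace H] {P : H →L[ℂ] H}
    (hP : IsPosOp P) {ι : Type*} [Fintype ι] {T : ι → H →L[ℂ] H}
    (hT : ∑ j, star (T j) * P * T j = P) (j : ι) :
    ∀ x ∈ LinearMap.ker (P : H →ₗ[ℂ] H), T j x ∈ LinearMap.ker (P : H →ₗ[ℂ] H) := by
  intro x hx
  have hinner (i : ι) : inner ℂ x ((star (T i) * P * T i) x) = inner ℂ (T i x) (P (T i x)) := by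
    rw [mul_apply_eq_comp, mul_apply_eq_comp,
      ContinuousLinearMap.star_eq_adjoint, ContinuousLinearMap.adjoint_inner_right]
  have hsum : ∑ i, inner ℂ (T i x) (P (T i x)) = 0 := by
    rw [← Finset.sum_congr rfl fun i _ => hinner i, ← inner_sum, ← sum_apply, hT,
      show P x = 0 from hx, inner_zero_right]
  exact hP.apply_eq_zero <|
    (Finset.sum_eq_zero_iff_of_nonneg fun i _ => hP (T i x)).mp hsum j (Finset.mem_univ j)

end Positivity

section Compression

variable {H : Type*} [NormedAddCommGroup H] [InnerProductSpace ℂ H]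
variable {K : Submodule ℂ H} [CompleteSpace K]

@[simp] theorem compressOp_apply (X : H →L[ℂ] H) (x : K) :
    compressOp K X x = K.orthogonalProjectionOnto (X x) := rfl

theorem compressOp_one : compressOp K 1 = 1 := by
  ext x
  simp [Submodule.orthogonalProjectionOnto_mem_subspace_eq_self]

variable (K) in
def compressOpₗ : (H →L[ℂ] H) →ₗ[ℂ] (K →L[ℂ] K) where
  toFun := compressOp K
  map_add' X Y := by ext x; simp
  map_smul' c X := by ext x; simp

theorem compressOp_mul_of_mapsTo {S : H →L[ℂ] H} (hS : ∀ x ∈ Kᗮ, S x ∈ Kᗮ) (R : H →L[ℂ] H) :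
    compressOp K (S * R) = compressOp K S * compressOp K R := by
  refine ContinuousLinearMap.ext fun x => ?_
  have h0 := K.orthogonalProjectionOnto_apply_of_mem_orthogonal
    (hS _ (K.sub_starProjection_mem_orthogonal (R x)))
  rw [map_sub, map_sub, sub_eq_zero] at h0
  exact h0

theorem isUnit_compressOp_of_mapsTo (u : (H →L[ℂ] H)ˣ) (hu : ∀ x ∈ Kᗮ, (↑u : H →L[ℂ] H) x ∈ Kᗮ)
    (hu' : ∀ x ∈ Kᗮ, (↑u⁻¹ : H →L[ℂ] H) x ∈ Kᗮ) : IsUnit (compressOp K u) :=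
  ⟨⟨compressOp K u, compressOp K ↑u⁻¹,
    by rw [← compressOp_mul_of_mapsTo hu, u.mul_inv, compressOp_one],
    by rw [← compressOp_mul_of_mapsTo hu', u.inv_mul, compressOp_one]⟩, rfl⟩

theorem isUnit_compressOp_of_mapsTo_of_finiteDimensional [FiniteDimensional ℂ K]
    {S : H →L[ℂ] H} (hS : IsUnit S) (hSK : ∀ x ∈ Kᗮ, S x ∈ Kᗮ) : IsUnit (compressOp K S) := by
  obtain ⟨u, rfl⟩ := hS
  have hright : compressOp K u * compressOp K ↑u⁻¹ = 1 := by
    rw [← compressOp_mul_of_mapsTo hSK, u.mul_inv, compressOp_one]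
  have : IsDedekindFiniteMonoid (K →L[ℂ] K) :=
    .of_injective ContinuousLinearMap.toLinearMapRingHom ContinuousLinearMap.coe_injective
  exact ⟨⟨_, _, hright, mul_eq_one_symm hright⟩, rfl⟩

variable [CompleteSpace H]

variable (K) in
def extendByZero : (K →L[ℂ] K) →⋆ₙₐ[ℂ] (H →L[ℂ] H) where
  toFun X := K.subtypeL ∘L X ∘L K.orthogonalProjectionOnto
  map_smul' c X := rfl
  map_zero' := rfl
  map_add' X Y := rfl
  map_mul' X Y := by
    ext x
    simp [mul_apply_eq_comp, Submodule.orthogonalProjectionOnto_mem_subspace_eq_self]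
  map_star' X := by
    simp only [ContinuousLinearMap.star_eq_adjoint, ContinuousLinearMap.adjoint_comp,
      Submodule.adjoint_subtypeL, Submodule.adjoint_orthogonalProjectionOnto,
      ContinuousLinearMap.comp_assoc]

variable (K) in
/-- `X ↦ X ⊕ 1` with respect to `H = K ⊕ Kᗮ`. -/
def extendByOne : (K →L[ℂ] K) →* (H →L[ℂ] H) where
  toFun X := extendByZero K X + (1 - extendByZero K 1)
  map_one' := add_sub_cancel _ _
  map_mul' X Y := by
    simp only [mul_add, add_mul, mul_sub, sub_mul, one_mul, mul_one, ← map_mul]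
    abel

@[simp] theorem extendByZero_apply (X : K →L[ℂ] K) (x : H) :
    extendByZero K X x = X (K.orthogonalProjectionOnto x) := rfl

theorem extendByOne_apply (X : K →L[ℂ] K) :
    extendByOne K X = extendByZero K X + (1 - extendByZero K 1) := rfl

theorem star_extendByOne (X : K →L[ℂ] K) : star (extendByOne K X) = extendByOne K (star X) := by
  -- `simp` does not find `star_one` on `K →L[ℂ] K` by itself: give it the instance explicitly.
  simp only [extendByOne_apply, star_add, star_sub, ← map_star, star_one (H →L[ℂ] H),
    star_one (K →L[ℂ] K)]

theorem star_extendByOne_mul_extendByZero_mul (T Y : K →L[ℂ] K) :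
    star (extendByOne K T) * extendByZero K Y * extendByOne K T
      = extendByZero K (star T * Y * T) := by
  rw [star_extendByOne]
  simp only [extendByOne_apply, mul_add, add_mul, mul_sub, sub_mul, one_mul, mul_one, ← map_mul]
  abel

theorem compressOp_extendByZero (X : K →L[ℂ] K) : compressOp K (extendByZero K X) = X := by
  ext x
  simp [Submodule.orthogonalProjectionOnto_mem_subspace_eq_self]

theorem extendByZero_compressOp {X : H →L[ℂ] H} (hker : ∀ x ∈ Kᗮ, X x = 0)
    (hrange : ∀ x, X x ∈ K) : extendByZero K (compressOp K X) = X := by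
  ext x
  have hx : X (K.starProjection x) = X x := by
    rw [eq_comm, ← sub_eq_zero, ← map_sub, hker _ (K.sub_starProjection_mem_orthogonal x)]
  calc extendByZero K (compressOp K X) x = K.starProjection (X (K.starProjection x)) := rfl
    _ = X x := by rw [hx, K.starProjection_eq_self_iff.mpr (hrange x)]

theorem star_compressOp (X : H →L[ℂ] H) : star (compressOp K X) = compressOp K (star X) := by
  simp only [compressOp, ContinuousLinearMap.star_eq_adjoint, ContinuousLinearMap.adjoint_comp,
    Submodule.adjoint_subtypeL, Submodule.adjoint_orthogonalProjectionOnto,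
    ContinuousLinearMap.comp_assoc]

theorem compressOp_star_mul_extendByZero_mul (S : H →L[ℂ] H) (Y : K →L[ℂ] K) :
    compressOp K (star S * extendByZero K Y * S) = star (compressOp K S) * Y * compressOp K S := by
  ext x
  simp [star_compressOp, mul_apply_eq_comp]

end Compression

section CompressExtendMaps

variable {A H : Type*} [NormedAddCommGroup H] [InnerProductSpace ℂ H] [Ring A] [Algebra ℂ A]
variable {K : Submodule ℂ H} [CompleteSpace K]

@[simp] theorem compressCP_apply (Φ : A →ₗ[ℂ] (H →L[ℂ] H)) (a : A) :
    compressCP K Φ a = compressOp K (Φ a) := rfl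

theorem compressCP_sum {ι : Type*} (s : Finset ι) (Φs : ι → A →ₗ[ℂ] (H →L[ℂ] H)) :
    compressCP K (∑ j ∈ s, Φs j) = ∑ j ∈ s, compressCP K (Φs j) := by
  ext1 a
  rw [compressCP_apply, LinearMap.sum_apply, LinearMap.sum_apply]
  exact map_sum (compressOpₗ K) (fun j => Φs j a) s

variable [CompleteSpace H]

theorem sum_star_mul_mul_eq_of_eq_sum {ι : Type*} [Fintype ι] {P : H →L[ℂ] H}
    {T : ι → H →L[ℂ] H} {Φ : A →ₗ[ℂ] (H →L[ℂ] H)} {Φs : ι → A →ₗ[ℂ] (H →L[ℂ] H)}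
    (hΦ : Φ 1 = P) (hΦs : ∀ j, Φs j 1 = P) (h : Φ = ∑ j, (conjAd (T j)).comp (Φs j)) :
    ∑ j, star (T j) * P * T j = P := by
  conv_rhs => rw [← hΦ, h]
  simp [conjAd, hΦs]

variable (K) in
def extendCP (Ψ : A →ₗ[ℂ] (K →L[ℂ] K)) : A →ₗ[ℂ] (H →L[ℂ] H) :=
  (extendByZero K : (K →L[ℂ] K) →ₗ[ℂ] (H →L[ℂ] H)) ∘ₗ Ψ

@[simp] theorem extendCP_apply (Ψ : A →ₗ[ℂ] (K →L[ℂ] K)) (a : A) :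
    extendCP K Ψ a = extendByZero K (Ψ a) := rfl

theorem compressCP_extendCP (Ψ : A →ₗ[ℂ] (K →L[ℂ] K)) : compressCP K (extendCP K Ψ) = Ψ := by
  ext1 a
  exact compressOp_extendByZero (Ψ a)

theorem extendCP_sum {ι : Type*} (s : Finset ι) (Ψs : ι → A →ₗ[ℂ] (K →L[ℂ] K)) :
    extendCP K (∑ j ∈ s, Ψs j) = ∑ j ∈ s, extendCP K (Ψs j) := by
  ext1 a
  simp

theorem extendCP_conjAd_comp (T : K →L[ℂ] K) (Ψ : A →ₗ[ℂ] (K →L[ℂ] K)) :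
    extendCP K ((conjAd T).comp Ψ) = (conjAd (extendByOne K T)).comp (extendCP K Ψ) := by
  ext1 a
  exact (star_extendByOne_mul_extendByZero_mul T (Ψ a)).symm

theorem compressCP_conjAd_comp_extendCP (S : H →L[ℂ] H) (Ψ : A →ₗ[ℂ] (K →L[ℂ] K)) :
    compressCP K ((conjAd S).comp (extendCP K Ψ)) = (conjAd (compressOp K S)).comp Ψ := by
  ext1 a
  exact compressOp_star_mul_extendByZero_mul S (Ψ a)

end CompressExtendMaps

section CompletelyPositive

variable {A H : Type*} [NormedAddCommGroup H] [InnerProductSpace ℂ H]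
variable [Ring A] [StarRing A] [Algebra ℂ A] {Φ : A →ₗ[ℂ] (H →L[ℂ] H)}

theorem IsCPMap.inner_apply_self_nonneg (hΦ : IsCPMap Φ) (a : A) (y : H) :
    0 ≤ inner ℂ y (Φ (star a * a) y) := by
  simpa using hΦ 1 ![a] ![y]

theorem IsCPMap.inner_eq_zero_of_apply_one_eq_zero (hΦ : IsCPMap Φ) {x : H} (hx : Φ 1 x = 0)
    (a : A) (y : H) : inner ℂ y (Φ (star a) x) = 0 ∧ inner ℂ x (Φ a y) = 0 := by
  refine Complex.eq_zero_of_quadratic_nonneg (hΦ.inner_apply_self_nonneg a y) fun c => ?_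
  have := hΦ 2 ![a, 1] ![c • y, x]
  simp only [Fin.sum_univ_two, Matrix.cons_val_zero, Matrix.cons_val_one, Matrix.cons_val_fin_one,
    star_one, mul_one, one_mul, map_smul, inner_smul_left, inner_smul_right, hx, inner_zero_right,
    add_zero] at this
  linear_combination this

theorem IsCPMap.apply_eq_zero_of_apply_one_eq_zero (hΦ : IsCPMap Φ) {x : H} (hx : Φ 1 x = 0)
    (a : A) : Φ a x = 0 := by
  have := (hΦ.inner_eq_zero_of_apply_one_eq_zero hx (star a) (Φ a x)).1
  rwa [star_star, inner_self_eq_zero] at this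

variable {K : Submodule ℂ H} [CompleteSpace K]

theorem IsCPMap.apply_mem_of_orthogonal_eq_ker (hΦ : IsCPMap Φ)
    (hK : Kᗮ = LinearMap.ker (Φ 1 : H →ₗ[ℂ] H)) (a : A) (y : H) : Φ a y ∈ K := by
  rw [← K.orthogonal_orthogonal, Submodule.mem_orthogonal]
  intro x hx
  rw [hK] at hx
  exact (hΦ.inner_eq_zero_of_apply_one_eq_zero hx a y).2

theorem IsCPMap.compressCP (hΦ : IsCPMap Φ) : IsCPMap (compressCP K Φ) := by
  intro n a h
  convert hΦ n a (fun i => (h i : H)) using 4 with i _ j _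
  exact K.inner_orthogonalProjectionOnto_eq_of_mem_left _ _

theorem compressCP_mem_CPP {P : H →L[ℂ] H} (hΦ : Φ ∈ CPP P) :
    compressCP K Φ ∈ CPP (compressOp K P) :=
  ⟨hΦ.1.compressCP, by rw [compressCP_apply, hΦ.2]⟩

variable [CompleteSpace H]

theorem IsCPMap.extendCP {Ψ : A →ₗ[ℂ] (K →L[ℂ] K)} (hΨ : IsCPMap Ψ) : IsCPMap (extendCP K Ψ) := by
  intro n a h
  convert hΨ n a (fun i => K.orthogonalProjectionOnto (h i)) using 4 with i _ j _
  exact (K.inner_orthogonalProjectionOnto_eq_of_mem_right _ _).symm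

theorem extendCP_mem_CPP {P : H →L[ℂ] H} {Ψ : A →ₗ[ℂ] (K →L[ℂ] K)}
    (hΨ : Ψ ∈ CPP (compressOp K P)) (hP : extendByZero K (compressOp K P) = P) :
    extendCP K Ψ ∈ CPP P :=
  ⟨hΨ.1.extendCP, by rw [extendCP_apply, hΨ.2, hP]⟩

theorem extendCP_compressCP (hΦ : IsCPMap Φ) (hK : Kᗮ = LinearMap.ker (Φ 1 : H →ₗ[ℂ] H)) :
    extendCP K (compressCP K Φ) = Φ := by
  ext1 a
  refine extendByZero_compressOp (fun x hx => ?_) (hΦ.apply_mem_of_orthogonal_eq_ker hK a)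
  rw [hK] at hx
  exact hΦ.apply_eq_zero_of_apply_one_eq_zero hx a

end CompletelyPositive

section Extreme

variable {A H : Type*} [NormedAddCommGroup H] [InnerProductSpace ℂ H] [CompleteSpace H]
variable [Ring A] [StarRing A] [Algebra ℂ A]
variable {K : Submodule ℂ H} [CompleteSpace K] {P : H →L[ℂ] H} {Φ : A →ₗ[ℂ] (H →L[ℂ] H)}

theorem isUnit_compressOp_of_star_mul_mul_eq (hP : IsPosOp P)
    (hK : Kᗮ = LinearMap.ker (P : H →ₗ[ℂ] H)) {S : H →L[ℂ] H} (hS : IsUnit S)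
    (hSP : star S * P * S = P) : IsUnit (compressOp K S) := by
  obtain ⟨u, rfl⟩ := hS
  have hmaps {T : H →L[ℂ] H} (hT : star T * P * T = P) : ∀ x ∈ Kᗮ, T x ∈ Kᗮ := by
    rw [hK]
    exact hP.mapsTo_ker_of_sum_star_mul_mul_eq (T := fun _ : Unit => T) (by simpa using hT) ()
  refine isUnit_compressOp_of_mapsTo u (hmaps hSP) (hmaps ?_)
  calc star ↑u⁻¹ * P * ↑u⁻¹ = star ↑u⁻¹ * (star ↑u * P * ↑u) * ↑u⁻¹ := by rw [hSP]
    _ = P := by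
      simp only [mul_assoc]
      rw [u.mul_inv, mul_one, ← mul_assoc, ← star_mul, u.mul_inv, star_one, one_mul]

theorem isPCExtreme_compressCP (hP : IsPosOp P) (hK : Kᗮ = LinearMap.ker (P : H →ₗ[ℂ] H))
    (hΦ : IsPCExtreme P Φ) : IsPCExtreme (compressOp K P) (compressCP K Φ) := by
  obtain ⟨hΦP, hext⟩ := hΦ
  have hΦK : extendCP K (compressCP K Φ) = Φ := extendCP_compressCP hΦP.1 (hΦP.2 ▸ hK)
  have hPK : extendByZero K (compressOp K P) = P := by
    simpa [hΦP.2] using congrArg (· 1) hΦK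
  refine ⟨compressCP_mem_CPP hΦP, fun n T Ψ hT hΨ _ hsum j => ?_⟩
  have hΨP (j : Fin n) := extendCP_mem_CPP (hΨ j) hPK
  have hdecomp : Φ = ∑ j, (conjAd (extendByOne K (T j))).comp (extendCP K (Ψ j)) := by
    rw [← hΦK, hsum, extendCP_sum]
    simp only [extendCP_conjAd_comp]
  obtain ⟨S, hS, hΨS⟩ := hext n _ _ (fun j => (hT j).map _) hΨP
    (sum_star_mul_mul_eq_of_eq_sum hΦP.2 (fun j => (hΨP j).2) hdecomp) hdecomp j
  have hSP : star S * P * S = P := by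
    simpa [conjAd, hΦP.2, (hΨP j).2] using (congrArg (· 1) hΨS).symm
  refine ⟨compressOp K S, isUnit_compressOp_of_star_mul_mul_eq hP hK hS hSP, ?_⟩
  calc Ψ j = compressCP K (extendCP K (Ψ j)) := (compressCP_extendCP _).symm
    _ = compressCP K ((conjAd S).comp (extendCP K (compressCP K Φ))) := by rw [hΨS, hΦK]
    _ = (conjAd (compressOp K S)).comp (compressCP K Φ) := compressCP_conjAd_comp_extendCP _ _

theorem isPCExtreme_of_isPCExtreme_compressCP [FiniteDimensional ℂ K] (hP : IsPosOp P)
    (hK : Kᗮ = LinearMap.ker (P : H →ₗ[ℂ] H)) (hΦ : Φ ∈ CPP P)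
    (h₀ : IsPCExtreme (compressOp K P) (compressCP K Φ)) : IsPCExtreme P Φ := by
  refine ⟨hΦ, fun n T Φs hT hΦs hTP hsum j => ?_⟩
  have hΦK : extendCP K (compressCP K Φ) = Φ := extendCP_compressCP hΦ.1 (hΦ.2 ▸ hK)
  have hΦsK (j : Fin n) : extendCP K (compressCP K (Φs j)) = Φs j :=
    extendCP_compressCP (hΦs j).1 ((hΦs j).2 ▸ hK)
  have hTK (j : Fin n) : ∀ x ∈ Kᗮ, T j x ∈ Kᗮ :=
    hK ▸ hP.mapsTo_ker_of_sum_star_mul_mul_eq hTP j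
  have hΦs₀ (j : Fin n) := compressCP_mem_CPP (K := K) (hΦs j)
  have hdecomp : compressCP K Φ
      = ∑ j, (conjAd (compressOp K (T j))).comp (compressCP K (Φs j)) := by
    rw [hsum, compressCP_sum]
    refine Finset.sum_congr rfl fun j _ => ?_
    rw [← compressCP_conjAd_comp_extendCP, hΦsK]
  obtain ⟨S₀, hS₀, hΦsS₀⟩ := h₀.2 n _ _
    (fun j => isUnit_compressOp_of_mapsTo_of_finiteDimensional (hT j) (hTK j)) hΦs₀
    (sum_star_mul_mul_eq_of_eq_sum h₀.1.2 (fun j => (hΦs₀ j).2) hdecomp) hdecomp j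
  refine ⟨extendByOne K S₀, hS₀.map _, ?_⟩
  rw [← hΦsK j, hΦsS₀, extendCP_conjAd_comp, hΦK]

end Extreme

theorem stmt9_general {A : Type*} [NormedRing A] [StarRing A] [NormedAlgebra ℂ A]
    {H : Type*} [NormedAddCommGroup H] [InnerProductSpace ℂ H] [CompleteSpace H]
    (P : H →L[ℂ] H) (hP : IsPosOp P)
    (Φ : A →ₗ[ℂ] (H →L[ℂ] H)) (hΦ : Φ ∈ CPP (A := A) P)
    (K : Submodule ℂ H) [CompleteSpace K]
    (hK : K = (LinearMap.range (P : H →ₗ[ℂ] H)).topologicalClosure) :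
    (IsPCExtreme P Φ → IsPCExtreme (compressOp K P) (compressCP K Φ)) ∧
    (FiniteDimensional ℂ H →
      IsPCExtreme (compressOp K P) (compressCP K Φ) → IsPCExtreme P Φ) := by
  have hKP := hP.orthogonal_eq_ker hK
  exact ⟨isPCExtreme_compressCP hP hKP, fun _ => isPCExtreme_of_isPCExtreme_compressCP hP hKP hΦ⟩

/-- Proposition `prop-Phi-Phi0`. For `Φ ∈ CP^{(P)}` with `P ≠ 0`,
`ker P ≠ 0`, `K` the closure of the range of `P`, `P₀` and `Φ₀` the compressions of `P` and `Φ`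
to `K`: (i) if `Φ` is `P`-`C*`-extreme then `Φ₀` is `P₀`-`C*`-extreme; (ii) if `H` is
finite-dimensional and `Φ₀` is `P₀`-`C*`-extreme then `Φ` is `P`-`C*`-extreme. -/
theorem stmt9 {A : Type*} [NormedRing A] [StarRing A] [CStarRing A] [NormedAlgebra ℂ A] [StarModule ℂ A] [CompleteSpace A]
    {H : Type*} [NormedAddCommGroup H] [InnerProductSpace ℂ H] [CompleteSpace H]
    (P : H →L[ℂ] H) (hP : IsPosOp P) (hP0 : P ≠ 0) (hker : LinearMap.ker (P : H →ₗ[ℂ] H) ≠ ⊥)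
    (Φ : A →ₗ[ℂ] (H →L[ℂ] H)) (hΦ : Φ ∈ CPP (A := A) P)
    (K : Submodule ℂ H) [CompleteSpace K]
    (hK : K = (LinearMap.range (P : H →ₗ[ℂ] H)).topologicalClosure) :
    (IsPCExtreme P Φ → IsPCExtreme (compressOp K P) (compressCP K Φ)) ∧
    (FiniteDimensional ℂ H →
      IsPCExtreme (compressOp K P) (compressCP K Φ) → IsPCExtreme P Φ) :=
  stmt9_general P hP Φ hΦ K hK
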